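/- Let f : [0,ε] → ℝ be differentiable with f'(s) ≤ -½ f(s)² - g(s) for all s ∈ [0,ε], where g : [0,ε] → ℝ is continuous and nonnegative. If f(0) < ∫₀^ε g(s) ds, then f(ε) < 0. -/
import Mathlib


open MeasureTheory intervalIntegral Set

/-- Raychaudhuri-type mechanism: if `f' ≤ -½ f² - g` on `[0,ε]` with `g` continuous
and nonnegative, and `f 0 < ∫₀^ε g`, then `f ε < 0`. -/
theorem stmt0 (ε : ℝ) (hε : 0 < ε) (f f' g : ℝ → ℝ)
    (hf : ∀ s ∈ Set.Icc (0:ℝ) ε, HasDerivAt f (f' s) s)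
    (hg : ContinuousOn g (Set.Icc (0:ℝ) ε))
    (hgnn : ∀ s ∈ Set.Icc (0:ℝ) ε, 0 ≤ g s)
    (hineq : ∀ s ∈ Set.Icc (0:ℝ) ε, f' s ≤ -(1/2) * (f s)^2 - g s)
    (h0 : f 0 < ∫ s in (0:ℝ)..ε, g s) :
    f ε < 0 := by
  set G : ℝ → ℝ := fun x => ∫ t in (0:ℝ)..x, g t with hG
  have huIcc : Set.uIcc (0:ℝ) ε = Set.Icc 0 ε := Set.uIcc_of_le hε.le
  have hgint : IntervalIntegrable g volume 0 ε := by
    apply ContinuousOn.intervalIntegrable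
    rwa [huIcc]
  have hGcont : ContinuousOn G (Set.Icc (0:ℝ) ε) := by
    have := intervalIntegral.continuousOn_primitive_interval' hgint
      (Set.left_mem_uIcc)
    rwa [huIcc] at this
  set h : ℝ → ℝ := fun x => f x + G x with hh
  have hcont : ContinuousOn h (Set.Icc (0:ℝ) ε) := by
    apply ContinuousOn.add _ hGcont
    intro x hx
    exact (hf x hx).continuousAt.continuousWithinAt
  have hderiv : ∀ x ∈ interior (Set.Icc (0:ℝ) ε), HasDerivAt h (f' x + g x) x := by
    intro x hx
    rw [interior_Icc] at hx
    have hxI : x ∈ Set.Icc (0:ℝ) ε := Set.mem_Icc_of_Ioo hx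
    have hGd : HasDerivAt G (g x) x := by
      apply intervalIntegral.integral_hasDerivAt_right
      · exact hgint.mono_set (by rw [Set.uIcc_of_le hxI.1, huIcc]; exact Set.Icc_subset_Icc le_rfl hxI.2)
      · exact ContinuousAt.stronglyMeasurableAtFilter isOpen_Ioo
          (fun y hy => hg.continuousAt (Icc_mem_nhds hy.1 hy.2)) x hx
      · exact hg.continuousAt (Icc_mem_nhds hx.1 hx.2)
    exact (hf x hxI).add hGd
  have hanti : AntitoneOn h (Set.Icc (0:ℝ) ε) := by
    apply antitoneOn_of_deriv_nonpos (convex_Icc 0 ε) hcont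
    · intro x hx
      exact (hderiv x hx).differentiableAt.differentiableWithinAt
    · intro x hx
      rw [(hderiv x hx).deriv]
      have hxI : x ∈ Set.Icc (0:ℝ) ε := by
        rw [interior_Icc] at hx; exact Set.mem_Icc_of_Ioo hx
      have := hineq x hxI
      nlinarith [sq_nonneg (f x)]
  have hle : h ε ≤ h 0 := hanti (Set.left_mem_Icc.mpr hε.le) (Set.right_mem_Icc.mpr hε.le) hε.le
  have hG0 : G 0 = 0 := intervalIntegral.integral_same
  simp only [hh, hG0, add_zero] at hle
  linarith
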